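/- For any real numbers a > 0 and b > 0, the space {(z,w) ∈ ℂ³ × ℂ³ : z·w = 0, ‖z‖² = a, ‖w‖² = b}, with the subspace topology, is homeomorphic to SU(3). -/

import Mathlib

/-!
The rows of a matrix in `SU(3)` are orthonormal, and the third row is the conjugate of the cross
product of the first two (`star A = adjugate A` when `A` is special unitary); conversely every
orthonormal pair `(u, v)` completes to `[u; v; conj (u × v)] ∈ SU(3)`. So `SU(3)` is homeomorphic to
the space of orthonormal pairs in `ℂ³`, and `(z, w) ↦ (z / √a, conj w / √b)` identifies the slice
with that space, because `z · w` is the Hermitian product of `z` and `conj w`.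
-/

/-- `ℂ³` with its Hermitian norm. -/
noncomputable abbrev C3 := EuclideanSpace ℂ (Fin 3)

/-- The bilinear dot product `z·w = z₁w₁ + z₂w₂ + z₃w₃` (no complex conjugation). -/
noncomputable def dotProd (z w : C3) : ℂ := ∑ i, z i * w i

/-- The special unitary group SU(3). -/
noncomputable abbrev SU3 := Matrix.specialUnitaryGroup (Fin 3) ℂ

open Matrix

lemma cross_eq_adjugate_col_two {R : Type*} [CommRing R] (A : Matrix (Fin 3) (Fin 3) R) :
    A 0 ⨯₃ A 1 = fun j => A.adjugate j 2 := by
  ext j; fin_cases j <;> simp [cross_apply, adjugate_fin_three]; ring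

lemma continuous_cross {R : Type*} [CommRing R] [TopologicalSpace R] [IsTopologicalRing R] :
    Continuous fun p : (Fin 3 → R) × (Fin 3 → R) => p.1 ⨯₃ p.2 := by
  simp only [cross_apply]
  fun_prop

section
variable {n : Type*} [Fintype n] {R : Type*} [CommRing R] [StarRing R]

lemma star_cross (u v : Fin 3 → R) : star (u ⨯₃ v) = star u ⨯₃ star v := by
  ext i; fin_cases i <;> simp [cross_apply]

lemma mul_star_apply_eq_dotProduct (A : Matrix n n R) (i j : n) :
    (A * star A) i j = A i ⬝ᵥ star (A j) := rfl

lemma star_eq_adjugate_of_mem_specialUnitaryGroup [DecidableEq n]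
    {A : Matrix n n R} (hA : A ∈ specialUnitaryGroup n R) : star A = A.adjugate := by
  obtain ⟨hU, hdet⟩ := mem_specialUnitaryGroup_iff.1 hA
  calc star A = (A.adjugate * A) * star A := by rw [adjugate_mul, hdet, one_smul, one_mul]
    _ = A.adjugate := by rw [Matrix.mul_assoc, mem_unitaryGroup_iff.1 hU, Matrix.mul_one]

lemma row_two_eq_star_cross {A : Matrix (Fin 3) (Fin 3) R}
    (hA : A ∈ specialUnitaryGroup (Fin 3) R) : A 2 = star (A 0 ⨯₃ A 1) := by
  ext j
  rw [cross_eq_adjugate_col_two, ← star_eq_adjugate_of_mem_specialUnitaryGroup hA]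
  simp

variable (n R) in
/-- For `R = ℂ` these are the orthonormal pairs of `ℂⁿ`: `u ⬝ᵥ star v` is the Hermitian product. -/
def orthonormalPairs : Set ((n → R) × (n → R)) :=
  {p | p.1 ⬝ᵥ star p.1 = 1 ∧ p.2 ⬝ᵥ star p.2 = 1 ∧ p.1 ⬝ᵥ star p.2 = 0}

lemma rows_mem_orthonormalPairs [DecidableEq n] {A : Matrix n n R}
    (hA : A ∈ unitaryGroup n R) {i j : n} (hij : i ≠ j) : (A i, A j) ∈ orthonormalPairs n R := by
  have h := congrFun₂ (mem_unitaryGroup_iff.1 hA)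
  simp only [mul_star_apply_eq_dotProduct] at h
  exact ⟨by simpa using h i i, by simpa using h j j, by simpa [hij] using h i j⟩

def frameMatrix (u v : Fin 3 → R) : Matrix (Fin 3) (Fin 3) R :=
  ![u, v, star (u ⨯₃ v)]

lemma frameMatrix_mem_specialUnitaryGroup {u v : Fin 3 → R}
    (h : (u, v) ∈ orthonormalPairs (Fin 3) R) :
    frameMatrix u v ∈ specialUnitaryGroup (Fin 3) R := by
  obtain ⟨hu, hv, huv⟩ : u ⬝ᵥ star u = 1 ∧ v ⬝ᵥ star v = 1 ∧ u ⬝ᵥ star v = 0 := h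
  have hvu : v ⬝ᵥ star u = 0 := by rw [dotProduct_star, huv, star_zero]
  have hcross : star (u ⨯₃ v) ⬝ᵥ u ⨯₃ v = 1 := by
    rw [star_cross, cross_dot_cross, dotProduct_comm (star u), dotProduct_comm (star v),
      dotProduct_comm (star u), hu, hv, hvu, one_mul, zero_mul, sub_zero]
  refine mem_specialUnitaryGroup_iff.2 ⟨mem_unitaryGroup_iff.2 ?_, ?_⟩
  · ext i j
    rw [mul_star_apply_eq_dotProduct]
    fin_cases i <;> fin_cases j <;>
      simp [frameMatrix, hu, hv, huv, hvu, hcross, dot_self_cross, dot_cross_self, star_dotProduct]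
  · rw [frameMatrix, ← triple_product_eq_det, triple_product_permutation,
      triple_product_permutation, hcross]

lemma frameMatrix_rows {A : Matrix (Fin 3) (Fin 3) R} (hA : A ∈ specialUnitaryGroup (Fin 3) R) :
    frameMatrix (A 0) (A 1) = A := by
  funext i
  fin_cases i
  · rfl
  · rfl
  · exact (row_two_eq_star_cross hA).symm

variable [TopologicalSpace R] [IsTopologicalRing R] [ContinuousStar R]

def specialUnitaryGroupHomeomorphOrthonormalPairs :
    specialUnitaryGroup (Fin 3) R ≃ₜ orthonormalPairs (Fin 3) R where
  toFun A := ⟨(A.1 0, A.1 1), rows_mem_orthonormalPairs A.2.1 (by decide)⟩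
  invFun p := ⟨frameMatrix p.1.1 p.1.2, frameMatrix_mem_specialUnitaryGroup p.2⟩
  left_inv A := Subtype.ext (frameMatrix_rows A.2)
  right_inv p := rfl
  continuous_toFun := by
    have (i : Fin 3) : Continuous fun A : specialUnitaryGroup (Fin 3) R => A.1 i :=
      (continuous_apply i).comp continuous_subtype_val
    exact ((this 0).prodMk (this 1)).subtype_mk _
  continuous_invFun := by
    refine Continuous.subtype_mk (continuous_pi fun i => ?_) _
    fin_cases i
    · exact continuous_fst.comp continuous_subtype_val
    · exact continuous_snd.comp continuous_subtype_val
    · exact (continuous_star.comp continuous_cross).comp continuous_subtype_val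
end

section
variable {𝕜 ι : Type*} [RCLike 𝕜] [Fintype ι]

lemma EuclideanSpace.ofLp_dotProduct_star_self (z : EuclideanSpace 𝕜 ι) :
    z.ofLp ⬝ᵥ star z.ofLp = ((‖z‖ ^ 2 : ℝ) : 𝕜) := by
  rw [← EuclideanSpace.inner_eq_star_dotProduct, inner_self_eq_norm_sq_to_K]
  push_cast; rfl

lemma EuclideanSpace.inv_sqrt_smul_dotProduct_star_eq_one_iff {a : ℝ} (ha : 0 < a)
    (z : EuclideanSpace 𝕜 ι) :
    ((√a)⁻¹ • z.ofLp) ⬝ᵥ star ((√a)⁻¹ • z.ofLp) = 1 ↔ ‖z‖ ^ 2 = a := by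
  rw [star_smul, star_trivial, smul_dotProduct, dotProduct_smul, ofLp_dotProduct_star_self,
    smul_smul, RCLike.real_smul_eq_coe_mul, ← RCLike.ofReal_mul, ← RCLike.ofReal_one,
    RCLike.ofReal_inj, ← mul_inv, Real.mul_self_sqrt ha.le, inv_mul_eq_one₀ ha.ne', eq_comm]
end

lemma inv_sqrt_smul_mem_orthonormalPairs_iff {a b : ℝ} (ha : 0 < a) (hb : 0 < b) (z w : C3) :
    dotProd z w = 0 ∧ ‖z‖ ^ 2 = a ∧ ‖w‖ ^ 2 = b ↔
      ((√a)⁻¹ • z.ofLp, star ((√b)⁻¹ • w.ofLp)) ∈ orthonormalPairs (Fin 3) ℂ := by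
  have hdot : z.ofLp ⬝ᵥ w.ofLp = dotProd z w := rfl
  simp only [orthonormalPairs, Set.mem_ofPred_eq, star_star]
  rw [dotProduct_comm (star _), EuclideanSpace.inv_sqrt_smul_dotProduct_star_eq_one_iff ha,
    EuclideanSpace.inv_sqrt_smul_dotProduct_star_eq_one_iff hb, smul_dotProduct, dotProduct_smul,
    hdot]
  simp only [smul_eq_zero, inv_eq_zero, (Real.sqrt_pos.2 ha).ne', (Real.sqrt_pos.2 hb).ne',
    false_or]
  tauto

noncomputable def sliceHomeomorphOrthonormalPairs {a b : ℝ} (ha : 0 < a) (hb : 0 < b) :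
    {p : C3 × C3 | dotProd p.1 p.2 = 0 ∧ ‖p.1‖ ^ 2 = a ∧ ‖p.2‖ ^ 2 = b} ≃ₜ
      orthonormalPairs (Fin 3) ℂ :=
  let ofLp : C3 ≃ₜ (Fin 3 → ℂ) := (PiLp.continuousLinearEquiv 2 ℂ _).toHomeomorph
  Homeomorph.subtype
    ((ofLp.trans (Homeomorph.smulOfNeZero (√a)⁻¹ (by positivity))).prodCongr
      ((ofLp.trans (Homeomorph.smulOfNeZero (√b)⁻¹ (by positivity))).trans
        (starL' ℝ).toHomeomorph))
    fun p => inv_sqrt_smul_mem_orthonormalPairs_iff ha hb p.1 p.2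

theorem torus_slice_homeomorph_SU3 (a b : ℝ) (ha : 0 < a) (hb : 0 < b) :
    Nonempty
      (({p : C3 × C3 | dotProd p.1 p.2 = 0 ∧ ‖p.1‖ ^ 2 = a ∧ ‖p.2‖ ^ 2 = b} : Set (C3 × C3))
        ≃ₜ SU3) :=
  ⟨(sliceHomeomorphOrthonormalPairs ha hb).trans
    specialUnitaryGroupHomeomorphOrthonormalPairs.symm⟩
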